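/- arXiv:2011.11607 — 3 statements merged into one kernel-verified Lean document; each statement's English description precedes it below -/
import Mathlib

section
/- The number of short forests with exactly n leaves equals the number of faces of the (n-1)-dimensional cube, i.e. 3^(n-1). -/
/-- A short forest: a nonempty list of trees; each tree is a nonempty list of
branches, each branch carrying a positive number of leaves. -/
def IsShortForest (F : List (List ℕ)) : Prop :=
  F ≠ [] ∧ ∀ t ∈ F, t ≠ [] ∧ ∀ b ∈ t, 1 ≤ b

/-- Total number of leaves of a forest. -/
def forestLeaves (F : List (List ℕ)) : ℕ := (F.map List.sum).sum

def fstep (s : Fin 3) (F : List (List ℕ)) : List (List ℕ) :=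
  match s.val, F with
  | 0, (b :: t) :: F => ((b+1) :: t) :: F
  | 1, t :: F => (1 :: t) :: F
  | _, F => [1] :: F

def fdecode : List (Fin 3) → List (List ℕ)
  | [] => [[1]]
  | s :: w => fstep s (fdecode w)

lemma forest_shape {G : List (List ℕ)} (h : IsShortForest G) :
    ∃ b t F, G = (b :: t) :: F ∧ 1 ≤ b := by
  obtain ⟨hne, hall⟩ := h
  match G with
  | [] => exact absurd rfl hne
  | t0 :: F =>
    obtain ⟨ht0, hb⟩ := hall t0 (by simp)
    match t0 with
    | [] => exact absurd rfl ht0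
    | b :: t => exact ⟨b, t, F, rfl, hb b (by simp)⟩

lemma fdecode_forest (w : List (Fin 3)) : IsShortForest (fdecode w) := by
  induction w with
  | nil => refine ⟨by simp [fdecode], ?_⟩; intro t ht; simp [fdecode] at ht; simp [ht]
  | cons s w ih =>
    obtain ⟨b, t, F, hG, hb⟩ := forest_shape ih
    obtain ⟨hne, hall⟩ := ih
    have hmem : ∀ t' ∈ fdecode w, t' ≠ [] ∧ ∀ b ∈ t', 1 ≤ b := hall
    show IsShortForest (fstep s (fdecode w))
    rw [hG] at hmem ⊢
    have h1 := hmem (b :: t) (by simp)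
    have h1b : ∀ x ∈ t, 1 ≤ x := fun x hx => h1.2 x (by simp [hx])
    have h2 : ∀ t' ∈ F, t' ≠ [] ∧ ∀ x ∈ t', 1 ≤ x := fun t' ht' => hmem t' (by simp [ht'])
    fin_cases s <;> simp only [fstep] <;> refine ⟨by simp, ?_⟩ <;> simp <;>
      exact ⟨by tauto, fun a ha => h2 a ha⟩

lemma fdecode_leaves (w : List (Fin 3)) : forestLeaves (fdecode w) = w.length + 1 := by
  induction w with
  | nil => simp [fdecode, forestLeaves]
  | cons s w ih =>
    obtain ⟨b, t, F, hG, hb⟩ := forest_shape (fdecode_forest w)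
    show forestLeaves (fstep s (fdecode w)) = _
    rw [hG] at ih ⊢
    fin_cases s <;> simp only [fstep] <;> simp [forestLeaves] at ih ⊢ <;> omega

lemma fdecode_inj : Function.Injective fdecode := by
  intro w1 w2 h
  induction w1 generalizing w2 with
  | nil =>
    cases w2 with
    | nil => rfl
    | cons s w2 =>
      exfalso
      obtain ⟨b, t, F, hG, hb⟩ := forest_shape (fdecode_forest w2)
      have hne := (fdecode_forest w2).1
      rw [show fdecode (s :: w2) = fstep s (fdecode w2) from rfl, hG] at h
      rw [hG] at hne
      fin_cases s <;> simp [fstep, fdecode] at h <;> omega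
  | cons s1 w1 ih =>
    cases w2 with
    | nil =>
      exfalso
      obtain ⟨b, t, F, hG, hb⟩ := forest_shape (fdecode_forest w1)
      rw [show fdecode (s1 :: w1) = fstep s1 (fdecode w1) from rfl, hG] at h
      fin_cases s1 <;> simp [fstep, fdecode] at h <;> omega
    | cons s2 w2 =>
      obtain ⟨b1, t1, F1, hG1, hb1⟩ := forest_shape (fdecode_forest w1)
      obtain ⟨b2, t2, F2, hG2, hb2⟩ := forest_shape (fdecode_forest w2)
      rw [show fdecode (s1 :: w1) = fstep s1 (fdecode w1) from rfl,
          show fdecode (s2 :: w2) = fstep s2 (fdecode w2) from rfl, hG1, hG2] at h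
      have hne2 := (fdecode_forest w2).1
      rw [hG2] at hne2
      fin_cases s1 <;> fin_cases s2 <;> simp [fstep] at h <;>
        first
        | (exfalso; omega)
        | (obtain ⟨h1, h2⟩ := h
           congr 1
           apply ih
           rw [hG1, hG2]
           simp_all)

lemma fdecode_surj : ∀ n F, IsShortForest F → forestLeaves F = n → ∃ w, fdecode w = F := by
  intro n
  induction n using Nat.strong_induction_on with
  | _ n ih =>
    intro F hF hn
    obtain ⟨b, t, F', rfl, hb⟩ := forest_shape hF
    obtain ⟨hne, hall⟩ := hF
    have hleaves : forestLeaves ((b :: t) :: F') = b + t.sum + forestLeaves F' := by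
      simp [forestLeaves]
      try ring
    rcases Nat.lt_or_ge b 2 with hb2 | hb2
    · have hb1 : b = 1 := by omega
      subst hb1
      match t, F' with
      | [], [] => exact ⟨[], rfl⟩
      | [], t0 :: F'' =>
        have hG : IsShortForest (t0 :: F'') := ⟨by simp, fun t' ht' => hall t' (by simp [ht'])⟩
        have hlt : forestLeaves (t0 :: F'') < n := by
          simp only [forestLeaves, List.map_cons, List.sum_cons, List.sum_nil] at hn ⊢; omega
        obtain ⟨w, hw⟩ := ih _ hlt _ hG rfl
        refine ⟨2 :: w, ?_⟩
        show fstep 2 (fdecode w) = _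
        rw [hw]
        rfl
      | x :: t', F' =>
        have hx : 1 ≤ x := (hall (1 :: x :: t') (by simp)).2 x (by simp)
        have hG : IsShortForest ((x :: t') :: F') := by
          refine ⟨by simp, ?_⟩
          intro t'' ht''
          rcases List.mem_cons.mp ht'' with h | h
          · subst h
            exact ⟨by simp, fun y hy => (hall (1 :: x :: t') (by simp)).2 y (by simp [hy])⟩
          · exact hall t'' (by simp [h])
        have hlt : forestLeaves ((x :: t') :: F') < n := by
          simp only [forestLeaves, List.map_cons, List.sum_cons] at hn ⊢; omega
        obtain ⟨w, hw⟩ := ih _ hlt _ hG rfl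
        refine ⟨1 :: w, ?_⟩
        show fstep 1 (fdecode w) = _
        rw [hw]
        rfl
    · have hG : IsShortForest (((b-1) :: t) :: F') := by
        refine ⟨by simp, ?_⟩
        intro t'' ht''
        rcases List.mem_cons.mp ht'' with h | h
        · subst h
          refine ⟨by simp, ?_⟩
          intro y hy
          rcases List.mem_cons.mp hy with h | h
          · omega
          · exact (hall (b :: t) (by simp)).2 y (by simp [h])
        · exact hall t'' (by simp [h])
      have hlt : forestLeaves (((b-1) :: t) :: F') < n := by
        simp only [forestLeaves, List.map_cons, List.sum_cons] at hn ⊢; omega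
      obtain ⟨w, hw⟩ := ih _ hlt _ hG rfl
      refine ⟨0 :: w, ?_⟩
      show fstep 0 (fdecode w) = _
      rw [hw]
      show ((b - 1 + 1) :: t) :: F' = _
      congr 2
      omega


/-- The number of short forests with exactly `n` leaves equals the number of
faces of the `(n-1)`-dimensional cube, namely `3^(n-1)`. -/
theorem num_short_forests_eq_cube_faces (n : ℕ) (hn : 1 ≤ n) :
    {F : List (List ℕ) | IsShortForest F ∧ forestLeaves F = n}.ncard = 3 ^ (n - 1) := by
  have hset : {F : List (List ℕ) | IsShortForest F ∧ forestLeaves F = n} =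
      fdecode '' {w : List (Fin 3) | w.length = n - 1} := by
    ext F
    constructor
    · rintro ⟨hF, hl⟩
      obtain ⟨w, rfl⟩ := fdecode_surj _ F hF hl
      have := fdecode_leaves w
      exact ⟨w, by simp only [Set.mem_setOf_eq]; omega, rfl⟩
    · rintro ⟨w, hw, rfl⟩
      refine ⟨fdecode_forest w, ?_⟩
      rw [fdecode_leaves w]
      simp only [Set.mem_setOf_eq] at hw
      omega
  rw [hset, Set.ncard_image_of_injective _ fdecode_inj]
  rw [show ({w : List (Fin 3) | w.length = n - 1}).ncard
      = Nat.card {w : List (Fin 3) // w.length = n - 1} from (Nat.card_coe_set_eq _).symm]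
  have e : {w : List (Fin 3) // w.length = n - 1} ≃ List.Vector (Fin 3) (n-1) :=
    Equiv.refl _
  rw [Nat.card_congr e, Nat.card_eq_fintype_card, card_vector]
  simp
end

section
/- The map I from nice n-expressions to triples (F, T, G), where F is a (possibly empty) short forest, T is a planar depth-2 tree (possibly with zero branches), G is a (possibly empty) short forest, and the total number of leaves is n, is a bijection. -/
/-- `IsNice n l ss` says that the list of stretches `ss = [s_0, ..., s_k]`
together with the distinguished index `l` forms a nice `n`-expression:
each stretch is a nonempty subset of `{0,...,n}`, `max s_i = min s_{i+1}`,
`|s_i| ≥ 2` for `i ≠ l`, `min s_0 = 0` and `max s_k = n`. -/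
def IsNice (n l : ℕ) (ss : List (Finset ℕ)) : Prop :=
  ss ≠ [] ∧ l < ss.length ∧
  (∀ s ∈ ss, s.Nonempty) ∧
  (∀ s ∈ ss, s ⊆ Finset.range (n + 1)) ∧
  (∀ i, i + 1 < ss.length →
    ∃ m, m ∈ ss.getD i ∅ ∧ m ∈ ss.getD (i + 1) ∅ ∧
      (∀ x ∈ ss.getD i ∅, x ≤ m) ∧ (∀ x ∈ ss.getD (i + 1) ∅, m ≤ x)) ∧
  (∀ i < ss.length, i ≠ l → 2 ≤ (ss.getD i ∅).card) ∧
  (0 ∈ ss.getD 0 ∅) ∧ (n ∈ ss.getD (ss.length - 1) ∅)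

/-- Union of all stretches of a nice expression. -/
def stretchUnion (ss : List (Finset ℕ)) : Finset ℕ := ss.foldr (· ∪ ·) ∅

/-- Codimension of a nice `n`-expression: `l` plus the number of elements of
`{0,...,n}` missing from the union of the stretches. -/
def codim (n l : ℕ) (ss : List (Finset ℕ)) : ℕ :=
  l + (Finset.range (n + 1) \ stretchUnion ss).card

/-- A possibly empty short forest: each tree is a nonempty list of branches
with positive leaf counts. -/
def IsForest (F : List (List ℕ)) : Prop := ∀ t ∈ F, t ≠ [] ∧ ∀ b ∈ t, 1 ≤ b

/-- A possibly empty depth-2 tree: a list of positive branch leaf counts. -/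
def IsTree (t : List ℕ) : Prop := ∀ b ∈ t, 1 ≤ b

/-- Total leaves of a forest-tree-forest triple `(F, T, G)`. -/
def tripleLeaves (x : List (List ℕ) × List ℕ × List (List ℕ)) : ℕ :=
  forestLeaves x.1 + x.2.1.sum + forestLeaves x.2.2

/-- A forest-tree-forest triple with `n` leaves in total. -/
def IsTriple (n : ℕ) (x : List (List ℕ) × List ℕ × List (List ℕ)) : Prop :=
  IsForest x.1 ∧ IsTree x.2.1 ∧ IsForest x.2.2 ∧ tripleLeaves x = n

/-- Consecutive differences of a list. -/
def diffs (L : List ℕ) : List ℕ := List.zipWith (fun a b => b - a) L L.tail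

/-- The tree `ι(s)` of a stretch `s = {a_1 < ... < a_m}`: it has `m - 1`
branches, branch `j` carrying `a_{j+1} - a_j` leaves. -/
def iota (s : Finset ℕ) : List ℕ := diffs (s.sort (· ≤ ·))

/-- The map `I`, sending a nice expression `(l, [s_0, ..., s_k])` to the triple
`(ι(s_k) ∘ ... ∘ ι(s_{l+1}), ι(s_l), ι(s_{l-1}) ∘ ... ∘ ι(s_0))`. -/
def Ifun (p : ℕ × List (Finset ℕ)) : List (List ℕ) × List ℕ × List (List ℕ) :=
  ((p.2.drop (p.1 + 1)).reverse.map iota,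
   iota (p.2.getD p.1 ∅),
   (p.2.take p.1).reverse.map iota)

def stretchOf (a : ℕ) (t : List ℕ) : Finset ℕ := (t.scanl (· + ·) a).toFinset

def build (a : ℕ) : List (List ℕ) → List (Finset ℕ)
  | [] => []
  | t :: ts => stretchOf a t :: build (a + t.sum) ts

lemma scanl_ne_nil (a : ℕ) (t : List ℕ) : t.scanl (· + ·) a ≠ [] := by
  cases t <;> simp [List.scanl]

lemma mem_scanl_bounds {a x : ℕ} {t : List ℕ} (hx : x ∈ t.scanl (· + ·) a) :
    a ≤ x ∧ x ≤ a + t.sum := by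
  induction t generalizing a with
  | nil => simp [List.scanl] at hx; omega
  | cons b t ih =>
    rw [List.scanl_cons] at hx
    simp only [List.cons_append, List.nil_append, List.mem_cons] at hx
    rcases hx with rfl | hx
    · omega
    · have := ih hx; simp [List.sum_cons]; omega

lemma self_mem_scanl (a : ℕ) (t : List ℕ) : a ∈ t.scanl (· + ·) a := by
  cases t <;> simp [List.scanl]

lemma last_mem_scanl (a : ℕ) (t : List ℕ) : a + t.sum ∈ t.scanl (· + ·) a := by
  induction t generalizing a with
  | nil => simp [List.scanl]
  | cons b t ih =>
    rw [List.scanl_cons]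
    simp only [List.cons_append, List.nil_append, List.mem_cons, List.sum_cons]
    right; have := ih (a + b); rw [show a + (b + t.sum) = a + b + t.sum by omega]; exact this

lemma scanl_sorted_lt {a : ℕ} {t : List ℕ} (ht : ∀ b ∈ t, 1 ≤ b) :
    (t.scanl (· + ·) a).Pairwise (· < ·) := by
  induction t generalizing a with
  | nil => simp [List.scanl]
  | cons b t ih =>
    rw [List.scanl_cons]
    simp only [List.cons_append, List.nil_append, List.pairwise_cons]
    refine ⟨fun x hx => ?_, ih fun c hc => ht c (List.mem_cons_of_mem _ hc)⟩
    have h1 := (mem_scanl_bounds hx).1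
    have := ht b (List.mem_cons_self); omega

lemma scanl_eq_cons (a : ℕ) (t : List ℕ) :
    t.scanl (· + ·) a = a :: (t.scanl (· + ·) a).tail := by
  cases t <;> simp [List.scanl]

lemma diffs_scanl (a : ℕ) (t : List ℕ) : diffs (t.scanl (· + ·) a) = t := by
  induction t generalizing a with
  | nil => simp [List.scanl, diffs]
  | cons b t ih =>
    rw [List.scanl_cons]
    have h := ih (a + b)
    unfold diffs at h ⊢
    rw [scanl_eq_cons (a + b) t] at h ⊢
    simp only [List.tail_cons, List.zipWith_cons_cons] at h ⊢
    rw [h]; congr 1; omega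

lemma mem_stretchOf {a x : ℕ} {t : List ℕ} :
    x ∈ stretchOf a t ↔ x ∈ t.scanl (· + ·) a := List.mem_toFinset

lemma stretchOf_nonempty (a : ℕ) (t : List ℕ) : (stretchOf a t).Nonempty :=
  ⟨a, mem_stretchOf.mpr (self_mem_scanl a t)⟩

lemma sort_stretchOf {a : ℕ} {t : List ℕ} (ht : ∀ b ∈ t, 1 ≤ b) :
    (stretchOf a t).sort (· ≤ ·) = t.scanl (· + ·) a := by
  have hs := scanl_sorted_lt (a := a) ht
  exact (List.toFinset_sort _ hs.nodup).mpr (hs.imp le_of_lt)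

lemma iota_stretchOf {a : ℕ} {t : List ℕ} (ht : ∀ b ∈ t, 1 ≤ b) :
    iota (stretchOf a t) = t := by
  rw [iota, sort_stretchOf ht, diffs_scanl]

lemma stretchOf_min' {a : ℕ} {t : List ℕ} (h : (stretchOf a t).Nonempty) :
    (stretchOf a t).min' h = a := by
  refine le_antisymm (Finset.min'_le _ _ (mem_stretchOf.mpr (self_mem_scanl a t)))
    (Finset.le_min' _ _ _ fun x hx => (mem_scanl_bounds (mem_stretchOf.mp hx)).1)

lemma stretchOf_max' {a : ℕ} {t : List ℕ} (h : (stretchOf a t).Nonempty) :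
    (stretchOf a t).max' h = a + t.sum := by
  refine le_antisymm (Finset.max'_le _ _ _ fun x hx => (mem_scanl_bounds (mem_stretchOf.mp hx)).2)
    (Finset.le_max' _ _ (mem_stretchOf.mpr (last_mem_scanl a t)))

lemma card_stretchOf {a : ℕ} {t : List ℕ} (ht : ∀ b ∈ t, 1 ≤ b) :
    (stretchOf a t).card = t.length + 1 := by
  have := congrArg List.length (sort_stretchOf (a := a) ht)
  rwa [Finset.length_sort, List.length_scanl] at this

lemma scanl_diffs {L : List ℕ} (hL : L.Pairwise (· ≤ ·)) (hne : L ≠ []) :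
    (diffs L).scanl (· + ·) (L.headI) = L := by
  induction L with
  | nil => exact absurd rfl hne
  | cons x M ih =>
    cases M with
    | nil => simp [diffs, List.scanl]
    | cons y M =>
      have hxy : x ≤ y := (List.pairwise_cons.mp hL).1 y (List.mem_cons_self)
      have h2 : (y :: M).Pairwise (· ≤ ·) := (List.pairwise_cons.mp hL).2
      have := ih h2 (by simp)
      unfold diffs at this ⊢
      simp only [List.tail_cons, List.zipWith_cons_cons, List.scanl_cons, List.headI] at this ⊢
      rw [show x + (y - x) = y by omega]
      exact congrArg (x :: ·) this

lemma headI_eq_head {L : List ℕ} (h : L ≠ []) : L.headI = L.head h := by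
  cases L with
  | nil => exact absurd rfl h
  | cons x M => rfl

lemma stretchOf_iota {s : Finset ℕ} (h : s.Nonempty) :
    stretchOf (s.min' h) (iota s) = s := by
  have hsort : (s.sort (· ≤ ·)).Pairwise (· ≤ ·) := Finset.pairwise_sort _ _
  have hlen : 0 < (s.sort (· ≤ ·)).length := by
    rw [Finset.length_sort]; exact Finset.card_pos.mpr h
  have hne : s.sort (· ≤ ·) ≠ [] := List.length_pos_iff.mp hlen
  have hhead : (s.sort (· ≤ ·)).headI = s.min' h := by
    rw [headI_eq_head hne, List.head_eq_getElem, Finset.sorted_zero_eq_min']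
  rw [stretchOf, iota, ← hhead, scanl_diffs hsort hne, Finset.sort_toFinset]

lemma diffs_pos {L : List ℕ} (hL : L.Pairwise (· < ·)) : ∀ b ∈ diffs L, 1 ≤ b := by
  induction L with
  | nil => simp [diffs]
  | cons x M ih =>
    cases M with
    | nil => simp [diffs]
    | cons y M' =>
      intro b hb
      unfold diffs at hb
      simp only [List.tail_cons, List.zipWith_cons_cons, List.mem_cons] at hb
      rcases hb with rfl | hb
      · have : x < y := (List.pairwise_cons.mp hL).1 y (List.mem_cons_self); omega
      · exact ih (List.pairwise_cons.mp hL).2 b hb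

lemma iota_pos (s : Finset ℕ) : ∀ b ∈ iota s, 1 ≤ b :=
  diffs_pos (Finset.sortedLT_sort s).pairwise

lemma iota_length (s : Finset ℕ) : (iota s).length = s.card - 1 := by
  rw [iota, diffs, List.length_zipWith, List.length_tail, Finset.length_sort]
  omega

lemma iota_sum {s : Finset ℕ} (h : s.Nonempty) :
    s.min' h + (iota s).sum = s.max' h := by
  have := stretchOf_max' (t := iota s) (a := s.min' h) (stretchOf_nonempty _ _)
  simp only [stretchOf_iota h] at this
  omega

def ChainOK : ℕ → List (Finset ℕ) → Prop
  | _, [] => True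
  | a, s :: ss => ∃ h : s.Nonempty, s.min' h = a ∧ ChainOK (s.max' h) ss

lemma build_map_iota {a : ℕ} {ss : List (Finset ℕ)} (h : ChainOK a ss) :
    build a (ss.map iota) = ss := by
  induction ss generalizing a with
  | nil => simp [build]
  | cons s ss ih =>
    obtain ⟨hne, hmin, hch⟩ := h
    simp only [List.map_cons, build]
    have h1 : stretchOf a (iota s) = s := hmin ▸ stretchOf_iota hne
    have h2 : a + (iota s).sum = s.max' hne := by
      have := iota_sum hne; omega
    rw [h1, h2, ih hch]

lemma map_iota_build {a : ℕ} {ts : List (List ℕ)} (h : ∀ t ∈ ts, ∀ b ∈ t, 1 ≤ b) :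
    (build a ts).map iota = ts := by
  induction ts generalizing a with
  | nil => simp [build]
  | cons t ts ih =>
    simp only [build, List.map_cons]
    rw [iota_stretchOf (h t (List.mem_cons_self)),
      ih fun t' ht' => h t' (List.mem_cons_of_mem _ ht')]

lemma build_length (a : ℕ) (ts : List (List ℕ)) : (build a ts).length = ts.length := by
  induction ts generalizing a with
  | nil => rfl
  | cons t ts ih => simp [build, ih]

lemma build_mem_nonempty {a : ℕ} {ts : List (List ℕ)} : ∀ s ∈ build a ts, s.Nonempty := by
  induction ts generalizing a with
  | nil => simp [build]
  | cons t ts ih =>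
    intro s hs
    simp only [build, List.mem_cons] at hs
    rcases hs with rfl | hs
    · exact stretchOf_nonempty _ _
    · exact ih s hs

lemma build_mem_bounds {a : ℕ} {ts : List (List ℕ)} :
    ∀ s ∈ build a ts, ∀ x ∈ s, a ≤ x ∧ x ≤ a + (ts.map List.sum).sum := by
  induction ts generalizing a with
  | nil => simp [build]
  | cons t ts ih =>
    intro s hs x hx
    simp only [build, List.mem_cons] at hs
    simp only [List.map_cons, List.sum_cons]
    rcases hs with rfl | hs
    · have := mem_scanl_bounds (mem_stretchOf.mp hx); omega
    · have := ih s hs x hx; omega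

lemma build_getD {a : ℕ} {ts : List (List ℕ)} :
    ∀ i, i < ts.length → ∃ b, (build a ts).getD i ∅ = stretchOf b (ts.getD i []) := by
  induction ts generalizing a with
  | nil => simp
  | cons t ts ih =>
    intro i hi
    cases i with
    | zero => exact ⟨a, rfl⟩
    | succ j =>
      simp only [build, List.getD_cons_succ]
      exact ih j (by simpa using hi)

lemma build_overlap {a : ℕ} {ts : List (List ℕ)} :
    ∀ i, i + 1 < (build a ts).length →
      ∃ m, m ∈ (build a ts).getD i ∅ ∧ m ∈ (build a ts).getD (i + 1) ∅ ∧
        (∀ x ∈ (build a ts).getD i ∅, x ≤ m) ∧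
        (∀ x ∈ (build a ts).getD (i + 1) ∅, m ≤ x) := by
  induction ts generalizing a with
  | nil => simp [build]
  | cons t ts ih =>
    intro i hi
    cases i with
    | zero =>
      cases ts with
      | nil => simp [build] at hi
      | cons t' ts' =>
        refine ⟨a + t.sum, ?_, ?_, ?_, ?_⟩
        · exact mem_stretchOf.mpr (last_mem_scanl a t)
        · exact mem_stretchOf.mpr (self_mem_scanl _ t')
        · exact fun x hx => (mem_scanl_bounds (mem_stretchOf.mp hx)).2
        · exact fun x hx => (mem_scanl_bounds (mem_stretchOf.mp hx)).1
    | succ j =>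
      simp only [build, List.getD_cons_succ]
      simp only [build, List.length_cons] at hi
      exact ih j (by omega)

lemma build_zero_mem {a : ℕ} {t : List ℕ} {ts : List (List ℕ)} :
    a ∈ (build a (t :: ts)).getD 0 ∅ :=
  mem_stretchOf.mpr (self_mem_scanl a t)

lemma build_last_mem {a : ℕ} {ts : List (List ℕ)} (h : ts ≠ []) :
    a + (ts.map List.sum).sum ∈ (build a ts).getD (ts.length - 1) ∅ := by
  induction ts generalizing a with
  | nil => exact absurd rfl h
  | cons t ts ih =>
    cases ts with
    | nil =>
      simpa [build, List.getD_cons_zero] using mem_stretchOf.mpr (last_mem_scanl a t)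
    | cons t' ts' =>
      have := ih (a := a + t.sum) (by simp)
      simp only [build, List.length_cons, List.map_cons, List.sum_cons,
        Nat.add_sub_cancel] at this ⊢
      rw [List.getD_cons_succ]
      rw [show a + (t.sum + (t'.sum + (ts'.map List.sum).sum)) =
        a + t.sum + (t'.sum + (ts'.map List.sum).sum) by omega]
      exact this

lemma chainOK_of {ss : List (Finset ℕ)} {a : ℕ}
    (h1 : ∀ s ∈ ss, s.Nonempty)
    (h2 : ∀ i, i + 1 < ss.length →
      ∃ m, m ∈ ss.getD i ∅ ∧ m ∈ ss.getD (i + 1) ∅ ∧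
        (∀ x ∈ ss.getD i ∅, x ≤ m) ∧ (∀ x ∈ ss.getD (i + 1) ∅, m ≤ x))
    (h3 : a ∈ ss.getD 0 ∅) (h4 : ∀ x ∈ ss.getD 0 ∅, a ≤ x) : ChainOK a ss := by
  induction ss generalizing a with
  | nil => trivial
  | cons s ss ih =>
    have hne : s.Nonempty := h1 s (List.mem_cons_self)
    simp only [List.getD_cons_zero] at h3 h4
    refine ⟨hne, le_antisymm (Finset.min'_le _ _ h3) (Finset.le_min' _ _ _ h4), ?_⟩
    cases ss with
    | nil => trivial
    | cons s' ss' =>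
      obtain ⟨m, hm1, hm2, hm3, hm4⟩ := h2 0 (by simp)
      simp only [List.getD_cons_zero, List.getD_cons_succ] at hm1 hm2 hm3 hm4
      have hmax : s.max' hne = m :=
        le_antisymm (Finset.max'_le _ _ _ hm3) (Finset.le_max' _ _ hm1)
      exact ih (fun x hx => h1 x (List.mem_cons_of_mem _ hx))
        (fun i hi => by
          have := h2 (i + 1) (by simp at hi ⊢; omega)
          simpa only [List.getD_cons_succ] using this)
        (by rw [List.getD_cons_zero, hmax]; exact hm2)
        (by rw [List.getD_cons_zero, hmax]; exact hm4)

def Jfun (x : List (List ℕ) × List ℕ × List (List ℕ)) : ℕ × List (Finset ℕ) :=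
  (x.2.2.length, build 0 (x.2.2.reverse ++ x.2.1 :: x.1.reverse))

lemma build_zero_mem' {a : ℕ} {ts : List (List ℕ)} (h : ts ≠ []) :
    a ∈ (build a ts).getD 0 ∅ := by
  cases ts with
  | nil => exact absurd rfl h
  | cons t ts => exact build_zero_mem

/-- Decomposition of a list around index `l`. -/
lemma list_decomp {α : Type*} (ss : List α) (l : ℕ) (hl : l < ss.length) :
    ss = ss.take l ++ ss[l] :: ss.drop (l + 1) := by
  conv_lhs => rw [← List.take_append_drop l ss]
  rw [List.drop_eq_getElem_cons hl]

/-- For a nice expression, the total leaf count of the stretches is `n`. -/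
lemma nice_total {n l : ℕ} {ss : List (Finset ℕ)} (h : IsNice n l ss) :
    ((ss.map iota).map List.sum).sum = n := by
  obtain ⟨hne, hl, h1, h4, h5, h6, h7, h8⟩ := h
  have hck : ChainOK 0 ss := chainOK_of h1 h5 h7 (fun x _ => Nat.zero_le x)
  have hb : build 0 (ss.map iota) = ss := build_map_iota hck
  have hlen : (ss.map iota).length = ss.length := List.length_map _
  have hne' : ss.map iota ≠ [] := by simp [hne]
  have hmem1 := build_last_mem (a := 0) hne'
  rw [hb, hlen] at hmem1
  -- total ∈ ss.getD (len-1), which is a member of ss, hence ≤ n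
  have hlast_mem : ss.getD (ss.length - 1) ∅ ∈ ss := by
    rw [List.getD_eq_getElem _ _ (by omega : ss.length - 1 < ss.length)]
    exact List.getElem_mem _
  have hle : 0 + ((ss.map iota).map List.sum).sum ≤ n := by
    have := h4 _ hlast_mem hmem1
    simpa [Finset.mem_range, Nat.lt_succ_iff] using this
  have hge : n ≤ 0 + ((ss.map iota).map List.sum).sum := by
    have := build_mem_bounds (a := 0) (ts := ss.map iota)
    rw [hb] at this
    exact (this _ hlast_mem n h8).2
  omega

lemma mapsTo_Ifun {n l : ℕ} {ss : List (Finset ℕ)} (h : IsNice n l ss) :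
    IsTriple n (Ifun (l, ss)) := by
  obtain ⟨hne, hl, h1, h4, h5, h6, h7, h8⟩ := h
  refine ⟨?_, ?_, ?_, ?_⟩
  · -- forest from drop
    intro t ht
    simp only [Ifun, List.mem_map, List.mem_reverse] at ht
    obtain ⟨s, hs, rfl⟩ := ht
    obtain ⟨i, hi, rfl⟩ := List.mem_iff_getElem.mp hs
    rw [List.getElem_drop]
    have hiL : l + 1 + i < ss.length := by
      have := (List.length_drop (i := l+1) (l := ss)) ▸ hi; omega
    have hcard := h6 (l + 1 + i) hiL (by omega)
    rw [List.getD_eq_getElem _ _ hiL] at hcard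
    constructor
    · intro hnil
      have := iota_length ss[l+1+i]
      rw [hnil] at this
      simp at this; omega
    · exact iota_pos _
  · exact fun b hb => iota_pos _ b hb
  · -- forest from take
    intro t ht
    simp only [Ifun, List.mem_map, List.mem_reverse] at ht
    obtain ⟨s, hs, rfl⟩ := ht
    obtain ⟨i, hi, rfl⟩ := List.mem_iff_getElem.mp hs
    have hiL : i < l := by
      have := (List.length_take (i := l) (l := ss)) ▸ hi; omega
    rw [List.getElem_take]
    have hcard := h6 i (by omega) (by omega)
    rw [List.getD_eq_getElem _ _ (by omega)] at hcard
    constructor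
    · intro hnil
      have := iota_length ss[i]
      rw [hnil] at this
      simp at this; omega
    · exact iota_pos _
  · -- leaves
    have htot := nice_total ⟨hne, hl, h1, h4, h5, h6, h7, h8⟩
    have hdec := list_decomp ss l hl
    have hkey := congrArg (fun L => ((List.map iota L).map List.sum).sum) hdec
    simp only [List.map_append, List.map_cons, List.sum_append, List.sum_cons,
      List.map_map] at hkey
    rw [tripleLeaves]
    simp only [Ifun, forestLeaves, List.map_map, List.map_reverse, List.sum_reverse]
    rw [List.getD_eq_getElem _ _ hl]
    rw [List.map_map] at htot
    omega

lemma mapsTo_Jfun {n : ℕ} {x : List (List ℕ) × List ℕ × List (List ℕ)}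
    (h : IsTriple n x) : IsNice n (Jfun x).1 (Jfun x).2 := by
  obtain ⟨F, T, G⟩ := x
  obtain ⟨hF, hT, hG, hsum⟩ := h
  set ts : List (List ℕ) := G.reverse ++ T :: F.reverse with hts
  have hpos : ∀ t ∈ ts, ∀ b ∈ t, 1 ≤ b := by
    intro t ht
    rw [hts, List.mem_append, List.mem_cons] at ht
    rcases ht with ht | rfl | ht
    · exact (hG t (List.mem_reverse.mp ht)).2
    · exact hT
    · exact (hF t (List.mem_reverse.mp ht)).2
  have htslen : ts.length = G.length + (F.length + 1) := by simp [hts]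
  have htot : (ts.map List.sum).sum = n := by
    rw [← hsum]
    simp [hts, tripleLeaves, forestLeaves, List.map_reverse, List.sum_reverse]
    omega
  have hne : ts ≠ [] := by rw [hts]; simp
  have hlen : (build 0 ts).length = ts.length := build_length _ _
  refine ⟨?_, ?_, ?_, ?_, ?_, ?_, ?_, ?_⟩
  · simp only [Jfun]; rw [← hts]; exact List.ne_nil_of_length_pos (by omega)
  · simp only [Jfun]; rw [← hts]; omega
  · exact build_mem_nonempty
  · intro s hs y hy
    have := build_mem_bounds s hs y hy
    rw [htot] at this
    simp only [Finset.mem_range]; omega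
  · exact build_overlap
  · -- cardinality
    intro i hi hil
    simp only [Jfun] at hi hil ⊢
    rw [← hts] at hi ⊢
    have hi' : i < ts.length := by omega
    obtain ⟨b, hb⟩ := build_getD (a := 0) i hi'
    rw [hb]
    have htne : ts.getD i [] ≠ [] := by
      rw [List.getD_eq_getElem _ _ hi']
      have hei : ts[i]'hi' = (G.reverse ++ T :: F.reverse)[i]'(by rw [← hts]; exact hi') :=
        List.getElem_of_eq hts _
      rw [hei]
      rcases Nat.lt_or_ge i G.length with hiG | hiG
      · rw [List.getElem_append_left (by simpa using hiG)]
        exact (hG _ (List.mem_reverse.mp (List.getElem_mem _))).1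
      · have hiG' : G.length < i := lt_of_le_of_ne hiG (Ne.symm hil)
        rw [List.getElem_append_right (by simp; omega)]
        rw [List.getElem_cons]
        rw [dif_neg (by simp; omega)]
        exact (hF _ (List.mem_reverse.mp (List.getElem_mem _))).1
    have hposi : ∀ b' ∈ ts.getD i [], 1 ≤ b' := by
      intro b' hb'
      refine hpos _ ?_ b' hb'
      rw [List.getD_eq_getElem _ _ hi'] at hb' ⊢
      exact List.getElem_mem _
    rw [card_stretchOf hposi]
    have : ts.getD i [] ≠ [] := htne
    have : (ts.getD i []).length ≠ 0 := fun h0 => this (List.eq_nil_of_length_eq_zero h0)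
    omega
  · exact build_zero_mem' hne
  · simp only [Jfun, hlen]
    rw [← hts, hlen]
    have := build_last_mem (a := 0) hne
    rwa [htot, Nat.zero_add] at this

lemma leftInv {n l : ℕ} {ss : List (Finset ℕ)} (h : IsNice n l ss) :
    Jfun (Ifun (l, ss)) = (l, ss) := by
  obtain ⟨hne, hl, h1, h4, h5, h6, h7, h8⟩ := h
  have hck : ChainOK 0 ss := chainOK_of h1 h5 h7 (fun x _ => Nat.zero_le x)
  have hdec := list_decomp ss l hl
  simp only [Jfun, Ifun, Prod.mk.injEq]
  constructor
  · simp only [List.length_map, List.length_reverse, List.length_take]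
    omega
  · rw [List.map_reverse, List.reverse_reverse, List.map_reverse, List.reverse_reverse,
      List.getD_eq_getElem _ _ hl]
    have hthis : ss.map iota =
        (ss.take l).map iota ++ iota ss[l] :: (ss.drop (l+1)).map iota := by
      conv_lhs => rw [hdec]
      simp only [List.map_append, List.map_cons]
    rw [← hthis, build_map_iota hck]

lemma rightInv {n : ℕ} {x : List (List ℕ) × List ℕ × List (List ℕ)}
    (h : IsTriple n x) : Ifun (Jfun x) = x := by
  obtain ⟨F, T, G⟩ := x
  obtain ⟨hF, hT, hG, hsum⟩ := h
  set ts : List (List ℕ) := G.reverse ++ T :: F.reverse with hts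
  have hpos : ∀ t ∈ ts, ∀ b ∈ t, 1 ≤ b := by
    intro t ht
    rw [hts, List.mem_append, List.mem_cons] at ht
    rcases ht with ht | rfl | ht
    · exact (hG t (List.mem_reverse.mp ht)).2
    · exact hT
    · exact (hF t (List.mem_reverse.mp ht)).2
  have hmap : (build 0 ts).map iota = ts := map_iota_build hpos
  have hlen : (build 0 ts).length = ts.length := build_length _ _
  have htslen : ts.length = G.length + (F.length + 1) := by simp [hts]
  have hGlen : G.length < (build 0 ts).length := by omega
  simp only [Ifun, Jfun, Prod.mk.injEq]
  rw [← hts]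
  refine ⟨?_, ?_, ?_⟩
  · -- first component: F
    rw [show ((build 0 ts).drop (G.length + 1)).reverse.map iota
        = (((build 0 ts).map iota).drop (G.length + 1)).reverse by
      simp [List.map_reverse, List.map_drop]]
    rw [hmap, hts]
    rw [show G.length + 1 = G.reverse.length + 1 by simp]
    rw [show (G.reverse ++ T :: F.reverse).drop (G.reverse.length + 1)
        = (T :: F.reverse).drop 1 by
      rw [← List.drop_drop, List.drop_left]]
    simp
  · -- middle: T
    rw [List.getD_eq_getElem _ _ hGlen]
    rw [show iota (build 0 ts)[G.length]
        = ((build 0 ts).map iota)[G.length]'(by simpa using hGlen) from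
      (List.getElem_map _).symm]
    have h2 : ((build 0 ts).map iota)[G.length]'(by simpa using hGlen)
        = ts[G.length]'(by omega) := List.getElem_of_eq hmap _
    rw [h2]
    have h3 : ts[G.length]'(by omega) = (G.reverse ++ T :: F.reverse)[G.length]'(by simp) :=
      List.getElem_of_eq hts _
    rw [h3, List.getElem_append_right (by simp)]
    simp
  · -- third: G
    rw [show ((build 0 ts).take G.length).reverse.map iota
        = (((build 0 ts).map iota).take G.length).reverse by
      simp [List.map_reverse, List.map_take]]
    rw [hmap, hts]
    rw [show G.length = G.reverse.length by simp, List.take_left]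
    simp

/-- The map `I` is a bijection between nice `n`-expressions and
forest-tree-forest triples with `n` leaves in total. -/
theorem Ifun_bijOn (n : ℕ) :
    Set.BijOn Ifun {p : ℕ × List (Finset ℕ) | IsNice n p.1 p.2}
      {x : List (List ℕ) × List ℕ × List (List ℕ) | IsTriple n x} := by
  refine Set.InvOn.bijOn (f' := Jfun) ⟨?_, ?_⟩ ?_ ?_
  · intro p hp; obtain ⟨l, ss⟩ := p; exact leftInv hp
  · intro x hx; exact rightInv hx
  · intro p hp; obtain ⟨l, ss⟩ := p; exact mapsTo_Ifun hp
  · intro x hx; exact mapsTo_Jfun hx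
end

section
/- Each face transformation applied to a valid nice n-expression yields a valid nice n-expression (i.e. the conditions: stretches nonempty, max s_i = min s_{i+1}, |s_i| >= 2 for i != l, min s_0 = 0, max s_k = n are preserved). -/
/-- Drop transformation: remove the element `x` from the stretch `s_j`. -/
def dropT (j x : ℕ) (ss : List (Finset ℕ)) : List (Finset ℕ) :=
  ss.set j ((ss.getD j ∅).erase x)

/-- Break transformation: replace the stretch `s_j` by the pair of stretches
`{a ∈ s_j | a ≤ x}`, `{a ∈ s_j | a ≥ x}`. -/
def breakT (j x : ℕ) (ss : List (Finset ℕ)) : List (Finset ℕ) :=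
  ss.take j ++ [(ss.getD j ∅).filter (· ≤ x), (ss.getD j ∅).filter (x ≤ ·)] ++
    ss.drop (j + 1)

lemma breakT_length (j x : ℕ) (ss : List (Finset ℕ)) (hj : j < ss.length) :
    (breakT j x ss).length = ss.length + 1 := by
  simp [breakT]; omega

lemma breakT_getD (j x : ℕ) (ss : List (Finset ℕ)) (hj : j < ss.length) (i : ℕ) :
    (breakT j x ss).getD i ∅ =
      if i < j then ss.getD i ∅
      else if i = j then (ss.getD j ∅).filter (· ≤ x)
      else if i = j + 1 then (ss.getD j ∅).filter (x ≤ ·)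
      else ss.getD (i - 1) ∅ := by
  have h1 : (ss.take j).length = j := by simp; omega
  unfold breakT
  simp only [List.getD_eq_getElem?_getD, List.getElem?_append, List.getElem?_take,
    List.getElem?_drop, List.length_append, h1, List.length_cons, List.length_nil]
  split_ifs with h2 h3 h4 h5 h6 h7 h8 <;> try omega
  · rfl
  · simp only [show i - j = 0 by omega]; rfl
  · simp only [show i - j = 1 by omega]; rfl
  · rw [show j + 1 + (i - (j + 2)) = i - 1 by omega]

lemma getD_mem (ss : List (Finset ℕ)) (i : ℕ) (hi : i < ss.length) :
    ss.getD i ∅ ∈ ss := by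
  rw [List.getD_eq_getElem ss ∅ hi]
  exact List.getElem_mem hi

lemma dropT_getD (j x i : ℕ) (ss : List (Finset ℕ)) (hj : j < ss.length) :
    (dropT j x ss).getD i ∅ =
      if i = j then (ss.getD j ∅).erase x else ss.getD i ∅ := by
  simp only [dropT, List.getD_eq_getElem?_getD, List.getElem?_set]
  split_ifs with h2 h3 h4 <;> try omega
  · subst h2; simp
  · rfl

lemma breakT_nice (n l j x l' : ℕ) (ss : List (Finset ℕ)) (h : IsNice n l ss)
    (hj : j < ss.length) (hx : x ∈ ss.getD j ∅) (hl' : l' < ss.length + 1)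
    (hcard : ∀ i < ss.length + 1, i ≠ l' → 2 ≤ ((breakT j x ss).getD i ∅).card) :
    IsNice n l' (breakT j x ss) := by
  obtain ⟨hne, hl, hnonempty, hsub, hadj, hc2, h0, hn⟩ := h
  have hlen := breakT_length j x ss hj
  have hg := breakT_getD j x ss hj
  have hsj := getD_mem ss j hj
  have hxA : x ∈ (ss.getD j ∅).filter (· ≤ x) := Finset.mem_filter.2 ⟨hx, le_refl x⟩
  have hxB : x ∈ (ss.getD j ∅).filter (x ≤ ·) := Finset.mem_filter.2 ⟨hx, le_refl x⟩
  have hmem : ∀ s ∈ breakT j x ss,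
      s ∈ ss ∨ s = (ss.getD j ∅).filter (· ≤ x) ∨ s = (ss.getD j ∅).filter (x ≤ ·) := by
    intro s hs
    simp only [breakT, List.mem_append, List.mem_cons, List.not_mem_nil, or_false] at hs
    rcases hs with (hs | hs | hs) | hs
    · exact Or.inl (List.take_subset _ _ hs)
    · exact Or.inr (Or.inl hs)
    · exact Or.inr (Or.inr hs)
    · exact Or.inl (List.drop_subset _ _ hs)
  refine ⟨?_, ?_, ?_, ?_, ?_, ?_, ?_, ?_⟩
  · intro hcon; rw [hcon] at hlen; simp at hlen
  · omega
  · intro s hs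
    rcases hmem s hs with h' | h' | h'
    · exact hnonempty s h'
    · exact ⟨x, h' ▸ hxA⟩
    · exact ⟨x, h' ▸ hxB⟩
  · intro s hs
    rcases hmem s hs with h' | h' | h'
    · exact hsub s h'
    · exact h' ▸ (Finset.filter_subset _ _).trans (hsub _ hsj)
    · exact h' ▸ (Finset.filter_subset _ _).trans (hsub _ hsj)
  · intro i hi
    rw [hlen] at hi
    rw [hg i, hg (i + 1)]
    rcases lt_trichotomy i j with hij | hij | hij
    · rcases eq_or_lt_of_le (show i + 1 ≤ j by omega) with hij1 | hij1
      · -- i + 1 = j : pair (s_{j-1}, A)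
        obtain ⟨m, hm1, hm2, hm3, hm4⟩ := hadj i (by omega)
        rw [if_pos hij, if_neg (by omega : ¬ i + 1 < j), if_pos hij1]
        rw [hij1] at hm2 hm4
        exact ⟨m, hm1, Finset.mem_filter.2 ⟨hm2, hm4 x hx⟩, hm3,
          fun a ha => hm4 a (Finset.filter_subset _ _ ha)⟩
      · -- i + 1 < j : old pair
        rw [if_pos hij, if_pos hij1]
        exact hadj i (by omega)
    · -- i = j : pair (A, B)
      rw [if_neg (by omega : ¬ i < j), if_pos hij, if_neg (by omega : ¬ i + 1 < j),
        if_neg (by omega : ¬ i + 1 = j), if_pos (by omega : i + 1 = j + 1)]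
      exact ⟨x, hxA, hxB, fun a ha => (Finset.mem_filter.1 ha).2,
        fun a ha => (Finset.mem_filter.1 ha).2⟩
    · rcases eq_or_lt_of_le (show j + 1 ≤ i by omega) with hij1 | hij1
      · -- i = j + 1 : pair (B, s_{j+1})
        obtain ⟨m, hm1, hm2, hm3, hm4⟩ := hadj j (by omega)
        rw [if_neg (by omega : ¬ i < j), if_neg (by omega : ¬ i = j),
          if_pos (by omega : i = j + 1), if_neg (by omega : ¬ i + 1 < j),
          if_neg (by omega : ¬ i + 1 = j), if_neg (by omega : ¬ i + 1 = j + 1),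
          show i + 1 - 1 = j + 1 by omega]
        exact ⟨m, Finset.mem_filter.2 ⟨hm1, hm3 x hx⟩, hm2,
          fun a ha => hm3 a (Finset.filter_subset _ _ ha), hm4⟩
      · -- i > j + 1 : old pair (i-1, i)
        rw [if_neg (by omega : ¬ i < j), if_neg (by omega : ¬ i = j),
          if_neg (by omega : ¬ i = j + 1), if_neg (by omega : ¬ i + 1 < j),
          if_neg (by omega : ¬ i + 1 = j), if_neg (by omega : ¬ i + 1 = j + 1),
          show i + 1 - 1 = (i - 1) + 1 by omega]
        exact hadj (i - 1) (by omega)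
  · intro i hi hil'
    rw [hlen] at hi
    exact hcard i hi hil'
  · rw [hg 0]
    rcases Nat.eq_zero_or_pos j with rfl | hj0
    · rw [if_neg (lt_irrefl 0), if_pos rfl]
      exact Finset.mem_filter.2 ⟨h0, Nat.zero_le x⟩
    · rw [if_pos hj0]; exact h0
  · rw [hlen, hg, Nat.add_sub_cancel]
    have hxn : x ≤ n := by
      have := hsub _ hsj hx
      simp only [Finset.mem_range] at this; omega
    rcases eq_or_lt_of_le (show j + 1 ≤ ss.length by omega) with hj1 | hj1
    · rw [if_neg (by omega : ¬ ss.length < j), if_neg (by omega : ¬ ss.length = j),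
        if_pos (by omega : ss.length = j + 1)]
      have : n ∈ ss.getD j ∅ := by rwa [show j = ss.length - 1 by omega]
      exact Finset.mem_filter.2 ⟨this, hxn⟩
    · rw [if_neg (by omega : ¬ ss.length < j), if_neg (by omega : ¬ ss.length = j),
        if_neg (by omega : ¬ ss.length = j + 1)]
      exact hn

/-- Each face transformation applied to a valid nice `n`-expression yields a
valid nice `n`-expression. -/
theorem face_transformations_preserve_nice (n l : ℕ) (ss : List (Finset ℕ))
    (h : IsNice n l ss) :
    -- (1) Drop of an interior element `x` of a stretch `s_j`.
    (∀ j x, j < ss.length → x ∈ ss.getD j ∅ →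
      (∃ y ∈ ss.getD j ∅, y < x) → (∃ y ∈ ss.getD j ∅, x < y) →
      IsNice n l (dropT j x ss)) ∧
    -- (2) Inner break of a stretch `s_j`, `j ≠ l`, at an interior element `x`.
    (∀ j x, j < ss.length → j ≠ l → x ∈ ss.getD j ∅ →
      (∃ y ∈ ss.getD j ∅, y < x) → (∃ y ∈ ss.getD j ∅, x < y) →
      IsNice n (if j < l then l + 1 else l) (breakT j x ss)) ∧
    -- (3) Right outer break of `s_l` at `x < max s_l`.
    (∀ x, x ∈ ss.getD l ∅ → (∃ y ∈ ss.getD l ∅, x < y) →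
      IsNice n l (breakT l x ss)) ∧
    -- (4) Left outer break of `s_l` at `x > min s_l`.
    (∀ x, x ∈ ss.getD l ∅ → (∃ y ∈ ss.getD l ∅, y < x) →
      IsNice n (l + 1) (breakT l x ss)) := by
  have hl : l < ss.length := h.2.1
  refine ⟨?_, ?_, ?_, ?_⟩
  · -- (1) drop
    rintro j x hj hx ⟨y, hy, hyx⟩ ⟨z, hz, hxz⟩
    obtain ⟨hne, hl, hnonempty, hsub, hadj, hc2, h0, hn⟩ := h
    have hg := fun i => dropT_getD j x i ss hj
    have hlen : (dropT j x ss).length = ss.length := by simp [dropT]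
    have hsj := getD_mem ss j hj
    have hyE : y ∈ (ss.getD j ∅).erase x := Finset.mem_erase.2 ⟨Nat.ne_of_lt hyx, hy⟩
    have hzE : z ∈ (ss.getD j ∅).erase x := Finset.mem_erase.2 ⟨Nat.ne_of_gt hxz, hz⟩
    refine ⟨?_, ?_, ?_, ?_, ?_, ?_, ?_, ?_⟩
    · intro hc
      have h0len : (dropT j x ss).length = 0 := by rw [hc]; rfl
      omega
    · rw [hlen]; exact hl
    · intro s hs
      rcases List.mem_or_eq_of_mem_set hs with h' | h'
      · exact hnonempty s h'
      · exact ⟨y, h' ▸ hyE⟩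
    · intro s hs
      rcases List.mem_or_eq_of_mem_set hs with h' | h'
      · exact hsub s h'
      · exact h' ▸ (Finset.erase_subset _ _).trans (hsub _ hsj)
    · intro i hi
      rw [hlen] at hi
      rw [hg i, hg (i + 1)]
      obtain ⟨m, hm1, hm2, hm3, hm4⟩ := hadj i hi
      by_cases h1 : i = j
      · subst h1
        rw [if_pos rfl, if_neg (by omega : ¬ i + 1 = i)]
        have hmx : m ≠ x := by have := hm3 z hz; omega
        exact ⟨m, Finset.mem_erase.2 ⟨hmx, hm1⟩, hm2,
          fun a ha => hm3 a (Finset.erase_subset _ _ ha), hm4⟩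
      · rw [if_neg h1]
        by_cases h2 : i + 1 = j
        · rw [if_pos h2]
          rw [h2] at hm2 hm4
          have hmx : m ≠ x := by have := hm4 y hy; omega
          exact ⟨m, hm1, Finset.mem_erase.2 ⟨hmx, hm2⟩, hm3,
            fun a ha => hm4 a (Finset.erase_subset _ _ ha)⟩
        · rw [if_neg h2]
          exact ⟨m, hm1, hm2, hm3, hm4⟩
    · intro i hi hil
      rw [hlen] at hi
      rw [hg i]
      by_cases h1 : i = j
      · rw [if_pos h1]
        exact Finset.one_lt_card.2 ⟨y, hyE, z, hzE, by omega⟩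
      · rw [if_neg h1]
        exact hc2 i hi hil
    · rw [hg 0]
      by_cases h1 : 0 = j
      · rw [if_pos h1]
        exact Finset.mem_erase.2 ⟨by omega, h1 ▸ h0⟩
      · rw [if_neg h1]; exact h0
    · rw [hlen, hg]
      have hzn : z ≤ n := by
        have := hsub _ hsj hz
        simp only [Finset.mem_range] at this; omega
      by_cases h1 : ss.length - 1 = j
      · rw [if_pos h1]
        exact Finset.mem_erase.2 ⟨by omega, h1 ▸ hn⟩
      · rw [if_neg h1]; exact hn
  · -- (2) inner break
    rintro j x hj hjl hx ⟨y, hy, hyx⟩ ⟨z, hz, hxz⟩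
    have hc2 := h.2.2.2.2.2.1
    refine breakT_nice n l j x _ ss h hj hx (by split_ifs <;> omega) ?_
    intro i hi hil
    rw [breakT_getD j x ss hj i]
    have hxA : x ∈ (ss.getD j ∅).filter (· ≤ x) := Finset.mem_filter.2 ⟨hx, le_refl x⟩
    have hxB : x ∈ (ss.getD j ∅).filter (x ≤ ·) := Finset.mem_filter.2 ⟨hx, le_refl x⟩
    by_cases h1 : i < j
    · rw [if_pos h1]
      refine hc2 i (by omega) ?_
      split_ifs at hil <;> omega
    · rw [if_neg h1]
      by_cases h2 : i = j
      · rw [if_pos h2]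
        exact Finset.one_lt_card.2 ⟨y, Finset.mem_filter.2 ⟨hy, by omega⟩, x, hxA, by omega⟩
      · rw [if_neg h2]
        by_cases h3 : i = j + 1
        · rw [if_pos h3]
          exact Finset.one_lt_card.2 ⟨x, hxB, z, Finset.mem_filter.2 ⟨hz, by omega⟩, by omega⟩
        · rw [if_neg h3]
          refine hc2 (i - 1) (by omega) ?_
          split_ifs at hil <;> omega
  · -- (3) right outer break
    rintro x hx ⟨z, hz, hxz⟩
    have hc2 := h.2.2.2.2.2.1
    refine breakT_nice n l l x l ss h hl hx (by omega) ?_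
    intro i hi hil
    rw [breakT_getD l x ss hl i]
    by_cases h1 : i < l
    · rw [if_pos h1]; exact hc2 i (by omega) (by omega)
    · rw [if_neg h1, if_neg (by omega : ¬ i = l)]
      by_cases h3 : i = l + 1
      · rw [if_pos h3]
        exact Finset.one_lt_card.2 ⟨x, Finset.mem_filter.2 ⟨hx, le_refl x⟩, z,
          Finset.mem_filter.2 ⟨hz, by omega⟩, by omega⟩
      · rw [if_neg h3]
        exact hc2 (i - 1) (by omega) (by omega)
  · -- (4) left outer break
    rintro x hx ⟨y, hy, hyx⟩
    have hc2 := h.2.2.2.2.2.1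
    refine breakT_nice n l l x (l + 1) ss h hl hx (by omega) ?_
    intro i hi hil
    rw [breakT_getD l x ss hl i]
    by_cases h1 : i < l
    · rw [if_pos h1]; exact hc2 i (by omega) (by omega)
    · rw [if_neg h1]
      by_cases h2 : i = l
      · rw [if_pos h2]
        exact Finset.one_lt_card.2 ⟨y, Finset.mem_filter.2 ⟨hy, by omega⟩, x,
          Finset.mem_filter.2 ⟨hx, le_refl x⟩, by omega⟩
      · rw [if_neg h2, if_neg (by omega : ¬ i = l + 1)]
        exact hc2 (i - 1) (by omega) (by omega)
end
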